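/- Let ψ : ℕ → ℝ be a nonnegative sequence with Σ_{k=1}^∞ k·ψ(k) < ∞, let β ∈ ℝ and n ∈ ℕ (n ≥ 1). Then |𝓔_n(C^ψ_{β,1})_C − (1/π)·ψ(n)| ≤ (2/n)·Σ_{k=n+1}^∞ k·ψ(k). -/

import Mathlib

/-!
Expanding `Ψ_β` writes `(1/π) ∫ Ψ_β(x - t) φ(t) dt` as the absolutely convergent trigonometric
series `Σ_k ψ(k)/π · ∫ cos (k(x - t) - βπ/2) φ(t) dt` (the `k = 0` term vanishes since `φ` has mean
zero), so `f - S_{n-1}(f)` is its tail from `k = n`, and each of these integrals has modulus at most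
`‖φ‖₁ ≤ 1`. Hence `𝓔_n ≤ (ψ(n) + Σ_{k>n} ψ(k))/π`.

For the lower bound, take for `φ` two bumps of width `δ` and mass `±1/2`, half a period of
`cos (n ·)` apart. At a suitable point the `k = n` term equals `ψ(n)/π · sin(nδ)/(nδ)`, the other
terms contribute at most `Σ_{k>n} ψ(k)/π`, and letting `δ → 0` gives
`𝓔_n ≥ (ψ(n) - Σ_{k>n} ψ(k))/π`. Finally `n Σ_{k>n} ψ(k) ≤ Σ_{k>n} k ψ(k)`.
-/

open MeasureTheory Real Filter

noncomputable section

/-- `T` is a real trigonometric polynomial of degree at most `m`. -/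
def IsTrigPoly (m : ℕ) (T : ℝ → ℝ) : Prop :=
  ∃ a b : ℕ → ℝ, ∀ t : ℝ,
    T t = a 0 + ∑ k ∈ Finset.Icc 1 m, (a k * Real.cos (k * t) + b k * Real.sin (k * t))

/-- The best approximation `E_n(g)_{L₁}` of `g` in the `L₁`-metric on `[0, 2π]`
by trigonometric polynomials of degree at most `n - 1`. -/
def bestL1 (n : ℕ) (g : ℝ → ℝ) : ℝ :=
  sInf {I : ℝ | ∃ T : ℝ → ℝ, IsTrigPoly (n - 1) T ∧
    I = ∫ t in (0 : ℝ)..(2 * π), |g t - T t|}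

/-- The partial Fourier sum `S_m(f; x)` of order `m` of `f`. -/
def fourierSumR (m : ℕ) (f : ℝ → ℝ) (x : ℝ) : ℝ :=
  (1 / (2 * π)) * (∫ t in (0 : ℝ)..(2 * π), f t) +
    ∑ k ∈ Finset.Icc 1 m,
      ((1 / π) * (∫ t in (0 : ℝ)..(2 * π), f t * Real.cos (k * t)) * Real.cos (k * x) +
        (1 / π) * (∫ t in (0 : ℝ)..(2 * π), f t * Real.sin (k * t)) * Real.sin (k * x))

/-- The kernel `Ψ_β(t) = Σ_{k=1}^∞ ψ(k) cos(k t - βπ/2)`. -/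
def PsiKer (ψ : ℕ → ℝ) (β : ℝ) (t : ℝ) : ℝ :=
  ∑' k : ℕ, ψ (k + 1) * Real.cos (((k : ℝ) + 1) * t - β * π / 2)

/-- `f` belongs to the class `C^ψ_β L₁`, with `(ψ,β)`-derivative `φ`. -/
def InClassL1 (ψ : ℕ → ℝ) (β : ℝ) (f φ : ℝ → ℝ) : Prop :=
  Continuous f ∧ (∀ x, f (x + 2 * π) = f x) ∧
    (∀ x, φ (x + 2 * π) = φ x) ∧
    IntervalIntegrable φ MeasureTheory.volume (-π) π ∧
    (∫ t in (-π)..π, φ t) = 0 ∧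
    ∃ a₀ : ℝ, ∀ x, f x = a₀ / 2 + (1 / π) * ∫ t in (-π)..π, PsiKer ψ β (x - t) * φ t

/-- The uniform deviation `‖f - S_{n-1}(f;·)‖_C`. -/
def dev (n : ℕ) (f : ℝ → ℝ) : ℝ :=
  ⨆ x : ℝ, |f x - fourierSumR (n - 1) f x|

/-- `𝓔_n(C^ψ_{β,1})_C := sup_{f ∈ C^ψ_{β,1}} ‖f - S_{n-1}(f;·)‖_C`. -/
def EnClass (ψ : ℕ → ℝ) (β : ℝ) (n : ℕ) : ℝ :=
  sSup {v : ℝ | ∃ f φ : ℝ → ℝ, InClassL1 ψ β f φ ∧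
    (∫ t in (0 : ℝ)..(2 * π), |φ t|) ≤ 1 ∧ v = dev n f}

/-- The kernel `Ψ_{β,n}(t) = Σ_{k=n}^∞ ψ(k) cos(k t - βπ/2)`. -/
def PsiKerN (ψ : ℕ → ℝ) (β : ℝ) (n : ℕ) (t : ℝ) : ℝ :=
  ∑' k : ℕ, ψ (k + n) * Real.cos (((k + n : ℕ) : ℝ) * t - β * π / 2)


open scoped Topology

theorem integral_cos_int_mul_two_pi (m : ℤ) :
    ∫ x in (0 : ℝ)..2 * π, cos (m * x) = if m = 0 then 2 * π else 0 := by
  split_ifs with hm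
  · simp [hm]
  · have hm' : (m : ℝ) ≠ 0 := by exact_mod_cast hm
    rw [intervalIntegral.integral_comp_mul_left (fun x => cos x) hm', integral_cos]
    have : sin (m * (2 * π)) = 0 := by
      simpa [mul_comm, mul_left_comm] using sin_int_mul_pi (2 * m)
    simp [this]

theorem integral_sin_int_mul_two_pi (m : ℤ) : ∫ x in (0 : ℝ)..2 * π, sin (m * x) = 0 := by
  rcases eq_or_ne m 0 with hm | hm
  · simp [hm]
  · have hm' : (m : ℝ) ≠ 0 := by exact_mod_cast hm
    rw [intervalIntegral.integral_comp_mul_left (fun x => sin x) hm', integral_sin]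
    simp [cos_int_mul_two_pi]

theorem integral_cos_nat_mul_cos (k : ℕ) {j : ℕ} (hj : j ≠ 0) :
    ∫ x in (0 : ℝ)..2 * π, cos (k * x) * cos (j * x) = if k = j then π else 0 := by
  have hprod : ∀ x : ℝ, cos (k * x) * cos (j * x) =
      cos (((k - j : ℤ) : ℝ) * x) / 2 + cos (((k + j : ℤ) : ℝ) * x) / 2 := by
    intro x; push_cast; rw [sub_mul, add_mul, cos_sub, cos_add]; ring
  simp_rw [hprod]
  rw [intervalIntegral.integral_add ((by fun_prop : Continuous _).intervalIntegrable _ _)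
      ((by fun_prop : Continuous _).intervalIntegrable _ _),
    intervalIntegral.integral_div, intervalIntegral.integral_div,
    integral_cos_int_mul_two_pi, integral_cos_int_mul_two_pi]
  have hkj : (k + j : ℤ) ≠ 0 := by omega
  by_cases h : k = j <;> simp [h, hj, hkj, sub_eq_zero]

theorem integral_sin_nat_mul_cos (k j : ℕ) :
    ∫ x in (0 : ℝ)..2 * π, sin (k * x) * cos (j * x) = 0 := by
  have hprod : ∀ x : ℝ, sin (k * x) * cos (j * x) =
      sin (((k - j : ℤ) : ℝ) * x) / 2 + sin (((k + j : ℤ) : ℝ) * x) / 2 := by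
    intro x; push_cast; rw [sub_mul, add_mul, sin_sub, sin_add]; ring
  simp_rw [hprod]
  rw [intervalIntegral.integral_add ((by fun_prop : Continuous _).intervalIntegrable _ _)
      ((by fun_prop : Continuous _).intervalIntegrable _ _),
    intervalIntegral.integral_div, intervalIntegral.integral_div,
    integral_sin_int_mul_two_pi, integral_sin_int_mul_two_pi]
  simp

theorem integral_sin_nat_mul_sin (k : ℕ) {j : ℕ} (hj : j ≠ 0) :
    ∫ x in (0 : ℝ)..2 * π, sin (k * x) * sin (j * x) = if k = j then π else 0 := by
  have hprod : ∀ x : ℝ, sin (k * x) * sin (j * x) =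
      cos (((k - j : ℤ) : ℝ) * x) / 2 - cos (((k + j : ℤ) : ℝ) * x) / 2 := by
    intro x; push_cast; rw [sub_mul, add_mul, cos_sub, cos_add]; ring
  simp_rw [hprod]
  rw [intervalIntegral.integral_sub ((by fun_prop : Continuous _).intervalIntegrable _ _)
      ((by fun_prop : Continuous _).intervalIntegrable _ _),
    intervalIntegral.integral_div, intervalIntegral.integral_div,
    integral_cos_int_mul_two_pi, integral_cos_int_mul_two_pi]
  have hkj : (k + j : ℤ) ≠ 0 := by omega
  by_cases h : k = j <;> simp [h, hj, hkj, sub_eq_zero]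

theorem hasSum_intervalIntegral_of_abs_le_mul {a b : ℝ} {F : ℕ → ℝ → ℝ} {h : ℝ → ℝ}
    {M : ℕ → ℝ} (hh : IntervalIntegrable h volume a b) (hM : Summable M)
    (hF : ∀ k, AEStronglyMeasurable (F k) (volume.restrict (Set.uIoc a b)))
    (hFM : ∀ k t, |F k t| ≤ M k * |h t|) :
    HasSum (fun k => ∫ t in a..b, F k t) (∫ t in a..b, ∑' k, F k t) := by
  have hFs (t : ℝ) : Summable (fun k => F k t) :=
    .of_norm_bounded (hM.mul_right |h t|) (hFM · t)
  refine intervalIntegral.hasSum_integral_of_dominated_convergence (fun k t => M k * |h t|)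
    hF (fun k => .of_forall fun t _ => hFM k t) (.of_forall fun t _ => hM.mul_right _) ?_
    (.of_forall fun t _ => (hFs t).hasSum)
  simp_rw [tsum_mul_right]
  exact hh.abs.const_mul _

def trigTerm (a b : ℕ → ℝ) (k : ℕ) (x : ℝ) : ℝ := a k * cos (k * x) + b k * sin (k * x)

def trigSeries (a b : ℕ → ℝ) (x : ℝ) : ℝ := ∑' k, trigTerm a b k x

section TrigSeries

variable {a b : ℕ → ℝ}

theorem abs_trigTerm_le (k : ℕ) (x : ℝ) : |trigTerm a b k x| ≤ |a k| + |b k| := by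
  unfold trigTerm
  refine (abs_add_le _ _).trans (add_le_add ?_ ?_) <;> rw [abs_mul]
  · exact mul_le_of_le_one_right (abs_nonneg _) (abs_cos_le_one _)
  · exact mul_le_of_le_one_right (abs_nonneg _) (abs_sin_le_one _)

@[fun_prop]
theorem continuous_trigTerm (k : ℕ) : Continuous (trigTerm a b k) := by
  unfold trigTerm; fun_prop

theorem trigTerm_add_two_pi (k : ℕ) (x : ℝ) : trigTerm a b k (x + 2 * π) = trigTerm a b k x := by
  simp only [trigTerm, mul_add, cos_add_nat_mul_two_pi, sin_add_nat_mul_two_pi]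

theorem trigTerm_zero (x : ℝ) : trigTerm a b 0 x = a 0 := by simp [trigTerm]

theorem integral_trigTerm (k : ℕ) :
    ∫ x in (0 : ℝ)..2 * π, trigTerm a b k x = if k = 0 then 2 * π * a 0 else 0 := by
  rcases eq_or_ne k 0 with rfl | hk
  · simp [trigTerm_zero, mul_comm]
  have hcos := integral_cos_int_mul_two_pi k
  have hsin := integral_sin_int_mul_two_pi k
  push_cast at hcos hsin
  unfold trigTerm
  rw [intervalIntegral.integral_add ((by fun_prop : Continuous _).intervalIntegrable _ _)
      ((by fun_prop : Continuous _).intervalIntegrable _ _),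
    intervalIntegral.integral_const_mul, intervalIntegral.integral_const_mul, hcos, hsin]
  simp [hk]

theorem integral_trigTerm_mul_cos (k : ℕ) {j : ℕ} (hj : j ≠ 0) :
    ∫ x in (0 : ℝ)..2 * π, trigTerm a b k x * cos (j * x) = if k = j then π * a j else 0 := by
  simp_rw [trigTerm, add_mul, mul_assoc]
  rw [intervalIntegral.integral_add ((by fun_prop : Continuous _).intervalIntegrable _ _)
      ((by fun_prop : Continuous _).intervalIntegrable _ _),
    intervalIntegral.integral_const_mul, intervalIntegral.integral_const_mul,
    integral_cos_nat_mul_cos k hj, integral_sin_nat_mul_cos]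
  split_ifs with hk <;> simp [hk]; ring

theorem integral_trigTerm_mul_sin (k : ℕ) {j : ℕ} (hj : j ≠ 0) :
    ∫ x in (0 : ℝ)..2 * π, trigTerm a b k x * sin (j * x) = if k = j then π * b j else 0 := by
  simp_rw [trigTerm, add_mul, mul_assoc, mul_comm (cos _) (sin _)]
  rw [intervalIntegral.integral_add ((by fun_prop : Continuous _).intervalIntegrable _ _)
      ((by fun_prop : Continuous _).intervalIntegrable _ _),
    intervalIntegral.integral_const_mul, intervalIntegral.integral_const_mul,
    integral_sin_nat_mul_sin k hj, integral_sin_nat_mul_cos]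
  split_ifs with hk <;> simp [hk]; ring

variable (ha : Summable a) (hb : Summable b)
include ha hb

theorem summable_trigTerm (x : ℝ) : Summable (fun k => trigTerm a b k x) :=
  .of_norm_bounded (ha.abs.add hb.abs) (abs_trigTerm_le · x)

theorem continuous_trigSeries : Continuous (trigSeries a b) :=
  continuous_tsum continuous_trigTerm (ha.abs.add hb.abs) fun k x => abs_trigTerm_le k x

theorem integral_trigSeries_mul {w : ℝ → ℝ} (hw : Continuous w) (hw1 : ∀ x, |w x| ≤ 1) :
    ∫ x in (0 : ℝ)..2 * π, trigSeries a b x * w x =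
      ∑' k, ∫ x in (0 : ℝ)..2 * π, trigTerm a b k x * w x := by
  simp_rw [trigSeries, ← tsum_mul_right]
  refine (hasSum_intervalIntegral_of_abs_le_mul (h := fun _ => 1) intervalIntegrable_const
    (ha.abs.add hb.abs) (fun k => (by fun_prop : Continuous _).aestronglyMeasurable)
    fun k x => ?_).tsum_eq.symm
  rw [abs_mul, abs_one, mul_one]
  exact (mul_le_of_le_one_right (abs_nonneg _) (hw1 x)).trans (abs_trigTerm_le k x)

theorem integral_const_add_trigSeries_mul (c : ℝ) {w : ℝ → ℝ} (hw : Continuous w)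
    (hw1 : ∀ x, |w x| ≤ 1) :
    ∫ x in (0 : ℝ)..2 * π, (c + trigSeries a b x) * w x =
      c * (∫ x in (0 : ℝ)..2 * π, w x) + ∑' k, ∫ x in (0 : ℝ)..2 * π, trigTerm a b k x * w x := by
  simp_rw [add_mul]
  rw [intervalIntegral.integral_add (g := fun x => trigSeries a b x * w x)
      ((hw.intervalIntegrable _ _).const_mul c)
      (((continuous_trigSeries ha hb).mul hw).intervalIntegrable _ _),
    intervalIntegral.integral_const_mul, integral_trigSeries_mul ha hb hw hw1]

theorem fourierSumR_const_add_trigSeries (c : ℝ) (m : ℕ) (x : ℝ) :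
    fourierSumR m (fun y => c + trigSeries a b y) x =
      c + ∑ k ∈ Finset.range (m + 1), trigTerm a b k x := by
  have hmean : ∫ y in (0 : ℝ)..2 * π, (c + trigSeries a b y) = 2 * π * (c + a 0) := by
    have := integral_const_add_trigSeries_mul ha hb c continuous_const (w := fun _ => 1)
      (fun _ => by norm_num)
    simp only [mul_one, integral_trigTerm, tsum_ite_eq, intervalIntegral.integral_const,
      smul_eq_mul] at this
    rw [this]; ring
  have hcos (j : ℕ) (hj : j ≠ 0) :
      ∫ y in (0 : ℝ)..2 * π, (c + trigSeries a b y) * cos (j * y) = π * a j := by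
    have h := integral_cos_int_mul_two_pi j
    push_cast at h
    rw [integral_const_add_trigSeries_mul ha hb c (by fun_prop) (fun _ => abs_cos_le_one _), h]
    simp [integral_trigTerm_mul_cos _ hj, hj]
  have hsin (j : ℕ) (hj : j ≠ 0) :
      ∫ y in (0 : ℝ)..2 * π, (c + trigSeries a b y) * sin (j * y) = π * b j := by
    have h := integral_sin_int_mul_two_pi j
    push_cast at h
    rw [integral_const_add_trigSeries_mul ha hb c (by fun_prop) (fun _ => abs_sin_le_one _), h]
    simp [integral_trigTerm_mul_sin _ hj]
  have hpos (k : ℕ) (hk : k ∈ Finset.Icc 1 m) : k ≠ 0 := by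
    have := (Finset.mem_Icc.1 hk).1; omega
  rw [Finset.range_eq_Ico, Finset.sum_eq_sum_Ico_succ_bot (Nat.succ_pos m), trigTerm_zero]
  unfold fourierSumR
  rw [hmean, Finset.sum_congr rfl fun k hk => by rw [hcos k (hpos k hk), hsin k (hpos k hk)]]
  field_simp
  rw [add_assoc]
  rfl

theorem const_add_trigSeries_sub_fourierSumR (c : ℝ) (m : ℕ) (x : ℝ) :
    c + trigSeries a b x - fourierSumR m (fun y => c + trigSeries a b y) x =
      ∑' k, trigTerm a b (k + (m + 1)) x := by
  rw [fourierSumR_const_add_trigSeries ha hb, trigSeries,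
    ← (summable_trigTerm ha hb x).sum_add_tsum_nat_add (m + 1)]
  ring

end TrigSeries

theorem abs_intervalIntegral_mul_le {a b : ℝ} (hab : a ≤ b) {g φ : ℝ → ℝ} (hg : Continuous g)
    (hg1 : ∀ t, |g t| ≤ 1) (hφ : IntervalIntegrable φ volume a b) :
    |∫ t in a..b, g t * φ t| ≤ ∫ t in a..b, |φ t| := by
  refine (intervalIntegral.abs_integral_le_integral_abs hab).trans
    (intervalIntegral.integral_mono_on hab (hφ.continuousOn_mul hg.continuousOn).abs hφ.abs
      fun t _ => ?_)
  rw [abs_mul]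
  exact mul_le_of_le_one_left (abs_nonneg _) (hg1 t)

theorem abs_tsum_mul_le {ψ c : ℕ → ℝ} (hψ0 : ∀ k, 0 ≤ ψ k) (hψ : Summable ψ)
    (hc : ∀ k, |c k| ≤ 1) : |∑' k, ψ k * c k| ≤ ∑' k, ψ k := by
  have hterm (k : ℕ) : |ψ k * c k| ≤ ψ k := by
    rw [abs_mul, abs_of_nonneg (hψ0 k)]
    exact mul_le_of_le_one_right (hψ0 k) (hc k)
  have hsum : Summable fun k => ‖ψ k * c k‖ :=
    .of_nonneg_of_le (fun _ => norm_nonneg _) hterm hψ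
  exact (norm_tsum_le_tsum_norm hsum).trans (hsum.tsum_le_tsum hterm hψ)

theorem sub_tsum_le_tsum_mul {ψ c : ℕ → ℝ} (hψ0 : ∀ k, 0 ≤ ψ k) (hψ : Summable ψ)
    (hc : ∀ k, |c k| ≤ 1) : ψ 0 * c 0 - ∑' k, ψ (k + 1) ≤ ∑' k, ψ k * c k := by
  have hs : Summable fun k => ψ k * c k := .of_norm_bounded hψ fun k => by
    rw [Real.norm_eq_abs, abs_mul, abs_of_nonneg (hψ0 k)]
    exact mul_le_of_le_one_right (hψ0 k) (hc k)
  rw [hs.tsum_eq_zero_add]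
  linarith [neg_abs_le (∑' k, ψ (k + 1) * c (k + 1)),
    abs_tsum_mul_le (fun k => hψ0 (k + 1)) ((summable_nat_add_iff 1).2 hψ) fun k => hc (k + 1)]

theorem Function.Periodic.intervalIntegral_neg_pi_pi {g : ℝ → ℝ}
    (hg : Function.Periodic g (2 * π)) :
    ∫ t in (-π)..π, g t = ∫ t in (0 : ℝ)..2 * π, g t := by
  simpa [show -π + 2 * π = π by ring] using hg.intervalIntegral_add_eq (-π) 0

def psiIntegral (ψ : ℕ → ℝ) (β : ℝ) (φ : ℝ → ℝ) (x : ℝ) : ℝ :=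
  (1 / π) * ∫ t in (-π)..π, PsiKer ψ β (x - t) * φ t

def cosConv (β : ℝ) (φ : ℝ → ℝ) (k : ℕ) (x : ℝ) : ℝ :=
  ∫ t in (-π)..π, cos (k * (x - t) - β * π / 2) * φ t

def psiCos (ψ : ℕ → ℝ) (β : ℝ) (φ : ℝ → ℝ) (k : ℕ) : ℝ :=
  ψ k / π * ∫ t in (-π)..π, cos (k * t + β * π / 2) * φ t

def psiSin (ψ : ℕ → ℝ) (β : ℝ) (φ : ℝ → ℝ) (k : ℕ) : ℝ :=
  ψ k / π * ∫ t in (-π)..π, sin (k * t + β * π / 2) * φ t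

section PsiIntegral

variable {ψ : ℕ → ℝ} {β : ℝ} {φ : ℝ → ℝ}

theorem abs_cosConv_le (hφ : IntervalIntegrable φ volume (-π) π) (k : ℕ) (x : ℝ) :
    |cosConv β φ k x| ≤ ∫ t in (-π)..π, |φ t| :=
  abs_intervalIntegral_mul_le (by linarith [pi_pos]) (by fun_prop) (fun _ => abs_cos_le_one _) hφ

theorem trigTerm_psiCos_psiSin (hφ : IntervalIntegrable φ volume (-π) π) (k : ℕ) (x : ℝ) :
    trigTerm (psiCos ψ β φ) (psiSin ψ β φ) k x = ψ k / π * cosConv β φ k x := by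
  have hexp (t : ℝ) : cos (k * (x - t) - β * π / 2) * φ t =
      cos (k * x) * (cos (k * t + β * π / 2) * φ t) +
        sin (k * x) * (sin (k * t + β * π / 2) * φ t) := by
    rw [show k * (x - t) - β * π / 2 = k * x - (k * t + β * π / 2) by ring, cos_sub]; ring
  simp only [trigTerm, psiCos, psiSin, cosConv, hexp]
  rw [intervalIntegral.integral_add
      ((hφ.continuousOn_mul (by fun_prop : Continuous _).continuousOn).const_mul _)
      ((hφ.continuousOn_mul (by fun_prop : Continuous _).continuousOn).const_mul _),
    intervalIntegral.integral_const_mul, intervalIntegral.integral_const_mul]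
  ring

theorem summable_psiCos (hψ : Summable ψ) (hφ : IntervalIntegrable φ volume (-π) π) :
    Summable (psiCos ψ β φ) := by
  refine .of_norm_bounded ((hψ.abs.div_const π).mul_right (∫ t in (-π)..π, |φ t|)) fun k => ?_
  rw [Real.norm_eq_abs, psiCos, abs_mul, abs_div, abs_of_pos pi_pos]
  exact mul_le_mul_of_nonneg_left
    (abs_intervalIntegral_mul_le (by linarith [pi_pos]) (by fun_prop) (fun _ => abs_cos_le_one _)
      hφ) (by positivity)

theorem summable_psiSin (hψ : Summable ψ) (hφ : IntervalIntegrable φ volume (-π) π) :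
    Summable (psiSin ψ β φ) := by
  refine .of_norm_bounded ((hψ.abs.div_const π).mul_right (∫ t in (-π)..π, |φ t|)) fun k => ?_
  rw [Real.norm_eq_abs, psiSin, abs_mul, abs_div, abs_of_pos pi_pos]
  exact mul_le_mul_of_nonneg_left
    (abs_intervalIntegral_mul_le (by linarith [pi_pos]) (by fun_prop) (fun _ => abs_sin_le_one _)
      hφ) (by positivity)

theorem psiIntegral_eq_trigSeries (hψ : Summable ψ) (hφ : IntervalIntegrable φ volume (-π) π)
    (hφ0 : ∫ t in (-π)..π, φ t = 0) (x : ℝ) :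
    psiIntegral ψ β φ x = trigSeries (psiCos ψ β φ) (psiSin ψ β φ) x := by
  have hker (t : ℝ) : PsiKer ψ β (x - t) * φ t =
      ∑' k, ψ (k + 1) * (cos (((k + 1 : ℕ) : ℝ) * (x - t) - β * π / 2) * φ t) := by
    rw [PsiKer, ← tsum_mul_right]
    push_cast
    simp_rw [mul_assoc]
  have hswap := hasSum_intervalIntegral_of_abs_le_mul
    (F := fun k t => ψ (k + 1) * (cos (((k + 1 : ℕ) : ℝ) * (x - t) - β * π / 2) * φ t))
    hφ ((summable_nat_add_iff 1).2 hψ).abs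
    (fun k => ((by fun_prop : Continuous fun t => cos (((k + 1 : ℕ) : ℝ) * (x - t) - β * π / 2)
      ).aestronglyMeasurable.mul hφ.def'.aestronglyMeasurable).const_mul _)
    (fun k t => by
      rw [abs_mul, abs_mul]
      exact mul_le_mul_of_nonneg_left
        (mul_le_of_le_one_left (abs_nonneg _) (abs_cos_le_one _)) (abs_nonneg _))
  have hcos0 : psiCos ψ β φ 0 = 0 := by
    simp [psiCos, intervalIntegral.integral_const_mul, hφ0]
  rw [psiIntegral, trigSeries, (summable_trigTerm (summable_psiCos hψ hφ)
    (summable_psiSin hψ hφ) x).tsum_eq_zero_add, trigTerm_zero, hcos0, zero_add]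
  simp_rw [hker, ← hswap.tsum_eq, trigTerm_psiCos_psiSin hφ, intervalIntegral.integral_const_mul,
    ← tsum_mul_left]
  congr 1 with k
  rw [cosConv]; ring

end PsiIntegral

section ClassBounds

variable {ψ : ℕ → ℝ} {β : ℝ} {f φ : ℝ → ℝ} {n : ℕ}

theorem inClassL1_psiIntegral (hψ : Summable ψ) (hφper : ∀ x, φ (x + 2 * π) = φ x)
    (hφ : IntervalIntegrable φ volume (-π) π) (hφ0 : ∫ t in (-π)..π, φ t = 0) :
    InClassL1 ψ β (psiIntegral ψ β φ) φ := by
  have hrep := psiIntegral_eq_trigSeries (β := β) hψ hφ hφ0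
  refine ⟨?_, fun x => ?_, hφper, hφ, hφ0, 0, fun x => by rw [zero_div, zero_add]; rfl⟩
  · rw [funext hrep]
    exact continuous_trigSeries (summable_psiCos hψ hφ) (summable_psiSin hψ hφ)
  · simp only [hrep, trigSeries, trigTerm_add_two_pi]

theorem InClassL1.abs_cosConv_le_one (hcl : InClassL1 ψ β f φ)
    (hφ1 : ∫ t in (0 : ℝ)..2 * π, |φ t| ≤ 1) (k : ℕ) (x : ℝ) :
    |cosConv β φ k x| ≤ 1 := by
  obtain ⟨-, -, hφper, hφ, -⟩ := hcl
  refine (abs_cosConv_le hφ k x).trans ?_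
  rwa [Function.Periodic.intervalIntegral_neg_pi_pi fun t => by simp only [hφper]]

theorem InClassL1.sub_fourierSumR (hψ : Summable ψ) (hcl : InClassL1 ψ β f φ) (hn : 1 ≤ n)
    (x : ℝ) :
    f x - fourierSumR (n - 1) f x = (∑' k, ψ (k + n) * cosConv β φ (k + n) x) / π := by
  obtain ⟨-, -, -, hφ, hφ0, a₀, hf⟩ := hcl
  obtain rfl : f = fun y => a₀ / 2 + trigSeries (psiCos ψ β φ) (psiSin ψ β φ) y :=
    funext fun y => (hf y).trans (by rw [← psiIntegral_eq_trigSeries hψ hφ hφ0]; rfl)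
  rw [const_add_trigSeries_sub_fourierSumR (summable_psiCos hψ hφ) (summable_psiSin hψ hφ),
    Nat.sub_add_cancel hn, ← tsum_div_const]
  congr 1 with k
  rw [trigTerm_psiCos_psiSin hφ]
  ring

theorem InClassL1.abs_sub_fourierSumR_le (hψ0 : ∀ k, 0 ≤ ψ k) (hψ : Summable ψ)
    (hcl : InClassL1 ψ β f φ) (hφ1 : ∫ t in (0 : ℝ)..2 * π, |φ t| ≤ 1) (hn : 1 ≤ n) (x : ℝ) :
    |f x - fourierSumR (n - 1) f x| ≤ (∑' k, ψ (k + n)) / π := by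
  rw [hcl.sub_fourierSumR hψ hn, abs_div, abs_of_pos pi_pos]
  gcongr
  exact abs_tsum_mul_le (fun k => hψ0 _) ((summable_nat_add_iff n).2 hψ)
    fun k => hcl.abs_cosConv_le_one hφ1 _ x

theorem InClassL1.dev_le (hψ0 : ∀ k, 0 ≤ ψ k) (hψ : Summable ψ) (hcl : InClassL1 ψ β f φ)
    (hφ1 : ∫ t in (0 : ℝ)..2 * π, |φ t| ≤ 1) (hn : 1 ≤ n) :
    dev n f ≤ (∑' k, ψ (k + n)) / π :=
  ciSup_le (hcl.abs_sub_fourierSumR_le hψ0 hψ hφ1 hn)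

theorem EnClass_le_tsum (hψ0 : ∀ k, 0 ≤ ψ k) (hψ : Summable ψ) (hn : 1 ≤ n) :
    EnClass ψ β n ≤ (∑' k, ψ (k + n)) / π := by
  refine Real.sSup_le ?_ (div_nonneg (tsum_nonneg fun k => hψ0 _) pi_pos.le)
  rintro _ ⟨f, φ, hcl, hφ1, rfl⟩
  exact hcl.dev_le hψ0 hψ hφ1 hn

theorem InClassL1.abs_sub_fourierSumR_le_EnClass (hψ0 : ∀ k, 0 ≤ ψ k) (hψ : Summable ψ)
    (hcl : InClassL1 ψ β f φ) (hφ1 : ∫ t in (0 : ℝ)..2 * π, |φ t| ≤ 1) (hn : 1 ≤ n) (x : ℝ) :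
    |f x - fourierSumR (n - 1) f x| ≤ EnClass ψ β n := by
  have hdev : |f x - fourierSumR (n - 1) f x| ≤ dev n f :=
    le_ciSup ⟨_, Set.forall_mem_range.2 (hcl.abs_sub_fourierSumR_le hψ0 hψ hφ1 hn)⟩ x
  refine hdev.trans (le_csSup ⟨(∑' k, ψ (k + n)) / π, ?_⟩ ⟨f, φ, hcl, hφ1, rfl⟩)
  rintro _ ⟨f, φ, hcl, hφ1, rfl⟩
  exact hcl.dev_le hψ0 hψ hφ1 hn

end ClassBounds

theorem intervalIntegral_mul_indicator_Ioc {a b c d : ℝ} (hac : a ≤ c) (hcd : c ≤ d) (hdb : d ≤ b)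
    (h : ℝ → ℝ) : ∫ t in a..b, h t * (Set.Ioc c d).indicator 1 t = ∫ t in c..d, h t := by
  have hind : (fun t => h t * (Set.Ioc c d).indicator 1 t) = (Set.Ioc c d).indicator h := by
    ext t; by_cases ht : t ∈ Set.Ioc c d <;> simp [ht]
  rw [hind, intervalIntegral.integral_of_le (hac.trans (hcd.trans hdb)),
    integral_indicator measurableSet_Ioc, Measure.restrict_restrict measurableSet_Ioc,
    Set.inter_eq_left.2 (Set.Ioc_subset_Ioc hac hdb), intervalIntegral.integral_of_le hcd]

theorem intervalIntegrable_indicator_Ioc (a b c d : ℝ) :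
    IntervalIntegrable ((Set.Ioc c d).indicator (1 : ℝ → ℝ)) volume a b := by
  rw [intervalIntegrable_iff]
  exact (integrableOn_const (by simp)).indicator measurableSet_Ioc

def periodize (g : ℝ → ℝ) (t : ℝ) : ℝ := g (toIcoMod two_pi_pos (-π) t)

theorem periodize_add_two_pi (g : ℝ → ℝ) (t : ℝ) : periodize g (t + 2 * π) = periodize g t := by
  simp only [periodize, toIcoMod_add_right]

theorem periodize_eqOn (g : ℝ → ℝ) : Set.EqOn (periodize g) g (Set.uIoo (-π) π) := by
  intro t ht
  rw [Set.uIoo_of_le (by linarith [pi_pos])] at ht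
  rw [periodize, (toIcoMod_eq_self _).2 ⟨ht.1.le, by linarith [ht.2]⟩]

def dipoleProfile (n : ℕ) (δ : ℝ) (t : ℝ) : ℝ :=
  ((Set.Ioc (-(π / (2 * n))) (-(π / (2 * n)) + δ)).indicator 1 t -
    (Set.Ioc (π / (2 * n)) (π / (2 * n) + δ)).indicator 1 t) / (2 * δ)

def dipole (n : ℕ) (δ : ℝ) : ℝ → ℝ := periodize (dipoleProfile n δ)

section Dipole

variable {n : ℕ} {δ : ℝ}

theorem dipole_add_two_pi (t : ℝ) : dipole n δ (t + 2 * π) = dipole n δ t :=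
  periodize_add_two_pi _ t

theorem intervalIntegrable_dipoleProfile (a b : ℝ) :
    IntervalIntegrable (dipoleProfile n δ) volume a b :=
  ((intervalIntegrable_indicator_Ioc _ _ _ _).sub
    (intervalIntegrable_indicator_Ioc _ _ _ _)).div_const _

theorem intervalIntegrable_dipole : IntervalIntegrable (dipole n δ) volume (-π) π :=
  (intervalIntegrable_congr_uIoo (periodize_eqOn _)).2 (intervalIntegrable_dipoleProfile _ _)

variable (hn : 1 ≤ n) (hδ : 0 < δ) (hδn : δ < π / (2 * n))
include hn hδ hδn

theorem integral_mul_dipole {h : ℝ → ℝ} (hh : Continuous h) :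
    ∫ t in (-π)..π, h t * dipole n δ t =
      ((∫ t in -(π / (2 * n))..-(π / (2 * n)) + δ, h t) -
        ∫ t in π / (2 * n)..π / (2 * n) + δ, h t) / (2 * δ) := by
  have hn' : (1 : ℝ) ≤ n := by exact_mod_cast hn
  have hu : π / (2 * n) ≤ π / 2 := div_le_div_of_nonneg_left pi_pos.le two_pos (by linarith)
  have hu0 : 0 < π / (2 * n) := by positivity
  rw [intervalIntegral.integral_congr_uIoo fun t ht => by rw [dipole, periodize_eqOn _ ht]]
  simp_rw [dipoleProfile, mul_div_assoc', mul_sub]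
  rw [intervalIntegral.integral_div, intervalIntegral.integral_sub
      ((intervalIntegrable_indicator_Ioc _ _ _ _).continuousOn_mul hh.continuousOn)
      ((intervalIntegrable_indicator_Ioc _ _ _ _).continuousOn_mul hh.continuousOn),
    intervalIntegral_mul_indicator_Ioc (by linarith) (by linarith) (by linarith),
    intervalIntegral_mul_indicator_Ioc (by linarith) (by linarith) (by linarith)]

theorem integral_dipole : ∫ t in (-π)..π, dipole n δ t = 0 := by
  simpa using integral_mul_dipole hn hδ hδn continuous_const (h := fun _ => 1)

theorem integral_abs_dipole_le : ∫ t in (0 : ℝ)..2 * π, |dipole n δ t| ≤ 1 := by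
  have hn' : (1 : ℝ) ≤ n := by exact_mod_cast hn
  have hu : π / (2 * n) ≤ π / 2 := div_le_div_of_nonneg_left pi_pos.le two_pos (by linarith)
  have hu0 : 0 < π / (2 * n) := by positivity
  set U := Set.Ioc (-(π / (2 * n))) (-(π / (2 * n)) + δ)
  set V := Set.Ioc (π / (2 * n)) (π / (2 * n) + δ)
  have hbump (c : ℝ) (hc : -π ≤ c) (hcδ : c + δ ≤ π) :
      ∫ t in (-π)..π, (Set.Ioc c (c + δ)).indicator 1 t = δ := by
    simpa using intervalIntegral_mul_indicator_Ioc hc (by linarith) hcδ (fun _ => (1 : ℝ))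
  have hprofile (t : ℝ) :
      |dipoleProfile n δ t| ≤ (U.indicator 1 t + V.indicator 1 t) / (2 * δ) := by
    rw [dipoleProfile, abs_div, abs_of_pos (by positivity : 0 < 2 * δ)]
    gcongr
    have hnn (S : Set ℝ) : 0 ≤ S.indicator (1 : ℝ → ℝ) t :=
      Set.indicator_nonneg (fun _ _ => zero_le_one) t
    refine (abs_sub _ _).trans (le_of_eq ?_)
    rw [abs_of_nonneg (hnn _), abs_of_nonneg (hnn _)]
  rw [← Function.Periodic.intervalIntegral_neg_pi_pi fun t => by rw [dipole_add_two_pi],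
    intervalIntegral.integral_congr_uIoo fun t ht => by rw [dipole, periodize_eqOn _ ht]]
  calc ∫ t in (-π)..π, |dipoleProfile n δ t|
      ≤ ∫ t in (-π)..π, (U.indicator 1 t + V.indicator 1 t) / (2 * δ) :=
        intervalIntegral.integral_mono_on (by linarith [pi_pos])
          (intervalIntegrable_dipoleProfile _ _).abs
          (((intervalIntegrable_indicator_Ioc _ _ _ _).add
            (intervalIntegrable_indicator_Ioc _ _ _ _)).div_const _) fun t _ => hprofile t
    _ = 1 := by
      rw [intervalIntegral.integral_div, intervalIntegral.integral_add
        (intervalIntegrable_indicator_Ioc _ _ _ _) (intervalIntegrable_indicator_Ioc _ _ _ _),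
        hbump _ (by linarith) (by linarith), hbump _ (by linarith) (by linarith)]
      field_simp
      ring

theorem cosConv_dipole (β : ℝ) :
    cosConv β (dipole n δ) n (-(π / (2 * n)) + β * π / (2 * n)) = sin (n * δ) / (n * δ) := by
  have hn0 : (n : ℝ) ≠ 0 := by positivity
  have hkernel (t : ℝ) : cos (n * (-(π / (2 * n)) + β * π / (2 * n) - t) - β * π / 2) =
      -sin (n * t) := by
    rw [show n * (-(π / (2 * n)) + β * π / (2 * n) - t) - β * π / 2 = -(n * t) - π / 2 by
      field_simp; ring, cos_sub_pi_div_two, sin_neg]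
  rw [cosConv]
  simp_rw [hkernel]
  rw [integral_mul_dipole hn hδ hδn (by fun_prop)]
  simp only [intervalIntegral.integral_neg,
    intervalIntegral.integral_comp_mul_left (fun t => sin t) hn0, integral_sin, smul_eq_mul]
  have e1 : n * -(π / (2 * n)) = -(π / 2) := by field_simp
  have e2 : n * (-(π / (2 * n)) + δ) = n * δ - π / 2 := by field_simp; ring
  have e3 : n * (π / (2 * n)) = π / 2 := by field_simp
  have e4 : n * (π / (2 * n) + δ) = n * δ + π / 2 := by field_simp; ring
  rw [e1, e2, e3, e4, cos_neg, cos_pi_div_two, cos_sub_pi_div_two, cos_add_pi_div_two]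
  field_simp
  ring

end Dipole

theorem tendsto_sin_div_self : Tendsto (fun x => sin x / x) (𝓝[>] 0) (𝓝 1) := by
  simpa [div_eq_inv_mul] using (hasDerivAt_sin 0).tendsto_slope_zero_right

section LowerBound

variable {ψ : ℕ → ℝ} {β : ℝ} {n : ℕ}

theorem mul_sin_div_sub_tsum_le_EnClass (hψ0 : ∀ k, 0 ≤ ψ k) (hψ : Summable ψ) (hn : 1 ≤ n) {δ : ℝ}
    (hδ : 0 < δ) (hδn : δ < π / (2 * n)) :
    (ψ n * (sin (n * δ) / (n * δ)) - ∑' k, ψ (k + n + 1)) / π ≤ EnClass ψ β n := by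
  have hcl := inClassL1_psiIntegral (β := β) hψ dipole_add_two_pi intervalIntegrable_dipole
    (integral_dipole hn hδ hδn)
  have hφ1 := integral_abs_dipole_le hn hδ hδn
  set x₀ := -(π / (2 * n)) + β * π / (2 * n)
  have hdev := sub_tsum_le_tsum_mul (fun k => hψ0 (k + n)) ((summable_nat_add_iff n).2 hψ)
    fun k => hcl.abs_cosConv_le_one hφ1 (k + n) x₀
  have hval : cosConv β (dipole n δ) n x₀ = sin (n * δ) / (n * δ) := cosConv_dipole hn hδ hδn β
  simp only [zero_add, hval, add_right_comm _ 1 n] at hdev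
  set f := psiIntegral ψ β (dipole n δ)
  calc (ψ n * (sin (n * δ) / (n * δ)) - ∑' k, ψ (k + n + 1)) / π
      ≤ f x₀ - fourierSumR (n - 1) f x₀ := by
        rw [hcl.sub_fourierSumR hψ hn]
        gcongr
    _ ≤ EnClass ψ β n :=
        (le_abs_self _).trans (hcl.abs_sub_fourierSumR_le_EnClass hψ0 hψ hφ1 hn x₀)

theorem sub_tsum_le_EnClass (hψ0 : ∀ k, 0 ≤ ψ k) (hψ : Summable ψ) (hn : 1 ≤ n) :
    (ψ n - ∑' k, ψ (k + n + 1)) / π ≤ EnClass ψ β n := by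
  have hn0 : (0 : ℝ) < n := by exact_mod_cast hn
  have hscale : Tendsto (fun δ : ℝ => n * δ) (𝓝[>] 0) (𝓝[>] 0) :=
    tendsto_nhdsWithin_of_tendsto_nhds_of_eventually_within _
      ((continuous_const.mul continuous_id).tendsto' 0 0 (by simp) |>.mono_left nhdsWithin_le_nhds)
      (eventually_nhdsWithin_of_forall fun δ (hδ : 0 < δ) => mul_pos hn0 hδ)
  have hlim := (((tendsto_sin_div_self.comp hscale).const_mul (ψ n)).sub_const
    (∑' k, ψ (k + n + 1))).div_const π
  rw [mul_one] at hlim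
  refine le_of_tendsto hlim ?_
  filter_upwards [Ioo_mem_nhdsGT (by positivity : (0 : ℝ) < π / (2 * n))] with δ hδ
  exact mul_sin_div_sub_tsum_le_EnClass hψ0 hψ hn hδ.1 hδ.2

end LowerBound

theorem abs_EnClass_sub_le {ψ : ℕ → ℝ} (β : ℝ) {n : ℕ} (hψ0 : ∀ k, 0 ≤ ψ k) (hψ : Summable ψ)
    (hn : 1 ≤ n) : |EnClass ψ β n - ψ n / π| ≤ (∑' k, ψ (k + n + 1)) / π := by
  have hupper := EnClass_le_tsum (β := β) hψ0 hψ hn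
  rw [((summable_nat_add_iff n).2 hψ).tsum_eq_zero_add] at hupper
  simp only [zero_add, add_right_comm _ 1 n] at hupper
  have hlower := sub_tsum_le_EnClass (β := β) hψ0 hψ hn
  rw [add_div] at hupper
  rw [sub_div] at hlower
  rw [abs_le]
  constructor <;> linarith

theorem summable_of_summable_natCast_mul {ψ : ℕ → ℝ} (hψ0 : ∀ k, 0 ≤ ψ k)
    (hsum : Summable fun k : ℕ => (k : ℝ) * ψ k) : Summable ψ := by
  refine (summable_nat_add_iff 1).1 (.of_nonneg_of_le (fun k => hψ0 _) (fun k => ?_)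
    ((summable_nat_add_iff 1).2 hsum))
  exact le_mul_of_one_le_left (hψ0 _) (by push_cast; linarith [(Nat.cast_nonneg k : (0 : ℝ) ≤ k)])

theorem natCast_mul_tsum_le {ψ : ℕ → ℝ} (hψ0 : ∀ k, 0 ≤ ψ k)
    (hsum : Summable fun k : ℕ => (k : ℝ) * ψ k) (n : ℕ) :
    n * ∑' k, ψ (k + n + 1) ≤ ∑' k : ℕ, ((k : ℝ) + n + 1) * ψ (k + n + 1) := by
  have hshift : Summable fun k : ℕ => ((k : ℝ) + n + 1) * ψ (k + n + 1) := by
    simpa [add_assoc] using (summable_nat_add_iff (n + 1)).2 hsum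
  rw [← tsum_mul_left]
  refine Summable.tsum_le_tsum (fun k => mul_le_mul_of_nonneg_right ?_ (hψ0 _))
    (((summable_nat_add_iff (n + 1)).2 (summable_of_summable_natCast_mul hψ0 hsum)).mul_left _)
    hshift
  linarith [(Nat.cast_nonneg k : (0 : ℝ) ≤ k)]

/-- `|𝓔_n(C^ψ_{β,1})_C - (1/π) ψ(n)| ≤ (2/n) Σ_{k=n+1}^∞ k ψ(k)`. -/
theorem EnClass_near_psi_n (ψ : ℕ → ℝ) (hψ : ∀ k, 0 ≤ ψ k)
    (hsum : Summable (fun k : ℕ => (k : ℝ) * ψ k)) (β : ℝ) (n : ℕ) (hn : 1 ≤ n) :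
    |EnClass ψ β n - (1 / π) * ψ n| ≤
      (2 / (n : ℝ)) * ∑' k : ℕ, ((k : ℝ) + (n : ℝ) + 1) * ψ (k + n + 1) := by
  have hn0 : (0 : ℝ) < n := by exact_mod_cast hn
  have hT0 : 0 ≤ ∑' k, ψ (k + n + 1) := tsum_nonneg fun k => hψ _
  have htail := natCast_mul_tsum_le hψ hsum n
  calc |EnClass ψ β n - (1 / π) * ψ n|
      ≤ (∑' k, ψ (k + n + 1)) / π := by
        rw [one_div_mul_eq_div]
        exact abs_EnClass_sub_le β hψ (summable_of_summable_natCast_mul hψ hsum) hn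
    _ ≤ ∑' k, ψ (k + n + 1) := div_le_self hT0 (by linarith [pi_gt_three])
    _ ≤ (∑' k : ℕ, ((k : ℝ) + n + 1) * ψ (k + n + 1)) / n := by rw [le_div_iff₀ hn0]; linarith
    _ ≤ (2 / (n : ℝ)) * ∑' k : ℕ, ((k : ℝ) + (n : ℝ) + 1) * ψ (k + n + 1) := by
        rw [div_mul_eq_mul_div]
        gcongr
        linarith [mul_nonneg hn0.le hT0]
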